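/- Let r be an even natural number and let X = {f ∈ V : f(y, −x−y) + f(x+y, −x) + f(x,y) = 0}. Then the dimension of X over ℝ equals 2r/3 if r ≡ 0 (mod 6), (2r+2)/3 if r ≡ 2 (mod 6), and (2r+4)/3 if r ≡ 4 (mod 6). -/

import Mathlib

open MvPolynomial

/-- The substitution `(ρ* f)(x,y) = f(x+y, -x)` as a linear endomorphism of `ℝ[x,y]`. -/
noncomputable def rhoStar : MvPolynomial (Fin 2) ℝ →ₗ[ℝ] MvPolynomial (Fin 2) ℝ :=
  (aeval ![X 0 + X 1, -X 0]).toLinearMap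

/-- The substitution `((ρ²)* f)(x,y) = f(y, -x-y)` as a linear endomorphism of `ℝ[x,y]`. -/
noncomputable def rhoSqStar : MvPolynomial (Fin 2) ℝ →ₗ[ℝ] MvPolynomial (Fin 2) ℝ :=
  (aeval ![X 1, -X 0 - X 1]).toLinearMap

/-- The subspace `X = {f ∈ V : f(y,-x-y) + f(x+y,-x) + f(x,y) = 0}` of the space `V`
of homogeneous polynomials of degree `r`. -/
noncomputable def Xsp (r : ℕ) : Submodule ℝ (MvPolynomial (Fin 2) ℝ) :=
  MvPolynomial.homogeneousSubmodule (Fin 2) ℝ r ⊓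
    LinearMap.ker (rhoSqStar + rhoStar + LinearMap.id)

noncomputable section
namespace AuxDimX

def zt : ℂ := ⟨1/2, Real.sqrt 3 / 2⟩
def wt : ℂ := 1 - zt

lemma s3 : Real.sqrt 3 * Real.sqrt 3 = 3 := Real.mul_self_sqrt (by norm_num)
lemma s3pos : (0:ℝ) < Real.sqrt 3 := Real.sqrt_pos.mpr (by norm_num)

lemma zt_quad : zt * zt = zt - 1 := by
  apply Complex.ext <;> (try simp [zt, Complex.mul_re, Complex.mul_im]) <;> nlinarith [s3, s3pos]

lemma zt_im : zt.im ≠ 0 := by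
  simp only [zt]; intro hc; nlinarith [s3pos, hc]

lemma wt_quad : wt * wt = wt - 1 := by unfold wt; linear_combination zt_quad
lemma wt_im : wt.im ≠ 0 := by
  simp only [wt, Complex.sub_im, Complex.one_im, zt]
  intro hc; nlinarith [s3pos, hc]
lemma zt_mul_wt : zt * wt = 1 := by unfold wt; linear_combination -zt_quad
lemma zt_add_wt : zt + wt = 1 := by unfold wt; ring
lemma zt_sub_wt_ne : zt - wt ≠ 0 := by
  intro h
  have : zt.im - wt.im = 0 := by rw [← Complex.sub_im, h]; rfl
  simp only [zt, wt, Complex.sub_im, Complex.one_im] at this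
  nlinarith [s3pos, this]

lemma cube {z : ℂ} (h : z * z = z - 1) : z ^ 3 = -1 := by linear_combination (z+1) * h

lemma pow6 {z : ℂ} (h : z * z = z - 1) : z ^ 6 = 1 := by
  have h3 := cube h
  rw [show (6:ℕ) = 3*2 by rfl, pow_mul, h3]; norm_num

lemma pow_mod6 {z : ℂ} (h : z ^ 6 = 1) (d : ℕ) : z ^ d = z ^ (d % 6) := by
  conv_lhs => rw [← Nat.div_add_mod d 6]
  rw [pow_add, pow_mul, h, one_pow, one_mul]

lemma sum_zero {z : ℂ} (h : z * z = z - 1) (him : z.im ≠ 0) {d : ℕ}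
    (hd : d % 2 = 0) (h6 : d % 6 ≠ 0) : z ^ (2*d) + z ^ d + 1 = 0 := by
  have h6' : z ^ 6 = 1 := pow6 h
  have ht3 : (z ^ d) ^ 3 = 1 := by
    rw [← pow_mul, show d * 3 = 6 * (d / 2) by omega, pow_mul, h6', one_pow]
  have ht1 : z ^ d ≠ 1 := by
    rw [pow_mod6 h6' d]
    have : d % 6 = 2 ∨ d % 6 = 4 := by omega
    rcases this with h2 | h4
    · rw [h2]; intro hc
      have hz : z = 2 := by linear_combination hc - h
      apply him; rw [hz]; simp
    · rw [h4]; intro hc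
      have hz : z = -1 := by linear_combination (z^2+z)*h - hc
      apply him; rw [hz]; simp
  have hfac : (z ^ d - 1) * ((z^d)*(z^d) + z^d + 1) = 0 := by
    linear_combination ht3
  rcases mul_eq_zero.mp hfac with h0 | h0
  · exact absurd (by linear_combination h0) ht1
  · rw [two_mul, pow_add]; linear_combination h0

abbrev PR := MvPolynomial (Fin 2) ℝ
abbrev PC := MvPolynomial (Fin 2) ℂ

def uu : PC := X 0 + C zt * X 1
def vv : PC := X 0 + C wt * X 1
def qC : PC := X 0 * X 0 + X 0 * X 1 + X 1 * X 1
def qR : PR := X 0 * X 0 + X 0 * X 1 + X 1 * X 1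

def rhoC : PC →ₐ[ℂ] PC := aeval ![X 0 + X 1, -X 0]

lemma huv : uu * vv = qC := by
  have h1 : (C zt : PC) * C wt = 1 := by rw [← C_mul, zt_mul_wt, C_1]
  have h2 : (C zt : PC) + C wt = 1 := by rw [← C_add, zt_add_wt, C_1]
  unfold uu vv qC
  linear_combination (X 0 * X 1 : PC) * h2 + (X 1 * X 1 : PC) * h1

lemma rhoC_uu : rhoC uu = C wt * uu := by
  have h1 : (C zt : PC) * C wt = 1 := by rw [← C_mul, zt_mul_wt, C_1]
  have h2 : (C zt : PC) + C wt = 1 := by rw [← C_add, zt_add_wt, C_1]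
  unfold rhoC uu
  simp only [map_add, map_mul, aeval_X, aeval_C, Matrix.cons_val_zero, Matrix.cons_val_one,
    Matrix.head_cons, map_neg, algebraMap_eq]
  linear_combination (-(X 0 : PC)) * h2 + (-(X 1 : PC)) * h1

lemma rhoC_vv : rhoC vv = C zt * vv := by
  have h1 : (C zt : PC) * C wt = 1 := by rw [← C_mul, zt_mul_wt, C_1]
  have h2 : (C zt : PC) + C wt = 1 := by rw [← C_add, zt_add_wt, C_1]
  unfold rhoC vv
  simp only [map_add, map_mul, aeval_X, aeval_C, Matrix.cons_val_zero, Matrix.cons_val_one,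
    Matrix.head_cons, map_neg, algebraMap_eq]
  linear_combination (-(X 0 : PC)) * h2 + (-(X 1 : PC)) * h1

lemma rhoC_qC : rhoC qC = qC := by
  rw [← huv, map_mul, rhoC_uu, rhoC_vv]
  have h1 : (C zt : PC) * C wt = 1 := by rw [← C_mul, zt_mul_wt, C_1]
  linear_combination (uu * vv : PC) * h1

/-! ### real-side algebra homs and complexification -/

def rhoA : PR →ₐ[ℝ] PR := aeval ![X 0 + X 1, -X 0]
def rho2A : PR →ₐ[ℝ] PR := aeval ![X 1, -X 0 - X 1]

lemma rhoStar_eq (f : PR) : rhoStar f = rhoA f := rfl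
lemma rhoSqStar_eq (f : PR) : rhoSqStar f = rho2A f := rfl

lemma rho2A_eq (f : PR) : rho2A f = rhoA (rhoA f) := by
  have : rho2A = (rhoA.comp rhoA : PR →ₐ[ℝ] PR) := by
    apply MvPolynomial.algHom_ext
    intro i
    fin_cases i <;>
      simp [rhoA, rho2A, Matrix.cons_val_zero, Matrix.cons_val_one, Matrix.head_cons] <;> ring
  rw [this]; rfl

def rho2C : PC →ₐ[ℂ] PC := aeval ![X 1, -X 0 - X 1]

lemma rho2C_eq (f : PC) : rho2C f = rhoC (rhoC f) := by
  have : rho2C = (rhoC.comp rhoC : PC →ₐ[ℂ] PC) := by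
    apply MvPolynomial.algHom_ext
    intro i
    fin_cases i <;>
      simp [rhoC, rho2C, Matrix.cons_val_zero, Matrix.cons_val_one, Matrix.head_cons] <;> ring
  rw [this]; rfl

/-- complexification -/
def cx : PR →+* PC := MvPolynomial.map (algebraMap ℝ ℂ)

lemma cx_inj : Function.Injective cx :=
  MvPolynomial.map_injective _ (algebraMap ℝ ℂ).injective

def cxA : PR →ₐ[ℝ] PC := mapAlgHom (Algebra.ofId ℝ ℂ)

lemma cxA_eq (f : PR) : cxA f = cx f := rfl

lemma cx_rhoA (f : PR) : cx (rhoA f) = rhoC (cx f) := by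
  have h : cxA.comp rhoA = (rhoC.restrictScalars ℝ).comp cxA := by
    apply MvPolynomial.algHom_ext
    intro i
    fin_cases i <;>
      simp [rhoA, rhoC, cxA, mapAlgHom_apply, Matrix.cons_val_zero, Matrix.cons_val_one,
        Matrix.head_cons]
  have := DFunLike.congr_fun h f
  simpa [cxA_eq] using this

lemma cx_rho2A (f : PR) : cx (rho2A f) = rho2C (cx f) := by
  have h : cxA.comp rho2A = (rho2C.restrictScalars ℝ).comp cxA := by
    apply MvPolynomial.algHom_ext
    intro i
    fin_cases i <;>
      simp [rho2A, rho2C, cxA, mapAlgHom_apply, Matrix.cons_val_zero, Matrix.cons_val_one,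
        Matrix.head_cons]
  have := DFunLike.congr_fun h f
  simpa [cxA_eq] using this

/-! ### the Chebyshev-like sequences -/

def pp : ℕ → PR
  | 0 => C 2
  | 1 => C 2 * X 0 + X 1
  | (n+2) => (C 2 * X 0 + X 1) * pp (n+1) - qR * pp n

def ss : ℕ → PR
  | 0 => 0
  | 1 => X 1
  | (n+2) => (C 2 * X 0 + X 1) * ss (n+1) - qR * ss n

lemma lin_hom : ((C 2 * X 0 + X 1 : PR)).IsHomogeneous 1 :=
  ((isHomogeneous_X ℝ 0).C_mul 2).add (isHomogeneous_X ℝ 1)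

lemma qR_hom : (qR).IsHomogeneous 2 := by
  unfold qR
  exact (((isHomogeneous_X ℝ 0).mul (isHomogeneous_X ℝ 0)).add
    ((isHomogeneous_X ℝ 0).mul (isHomogeneous_X ℝ 1))).add
    ((isHomogeneous_X ℝ 1).mul (isHomogeneous_X ℝ 1))

lemma pp_hom : ∀ d, (pp d).IsHomogeneous d := by
  have key : ∀ d, (pp d).IsHomogeneous d ∧ (pp (d+1)).IsHomogeneous (d+1) := by
    intro d
    induction d with
    | zero => exact ⟨isHomogeneous_C _ _, lin_hom⟩
    | succ n ih =>
      refine ⟨ih.2, ?_⟩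
      show (pp (n+2)).IsHomogeneous (n+2)
      have h1 : ((C 2 * X 0 + X 1 : PR) * pp (n+1)).IsHomogeneous (1 + (n+1)) :=
        lin_hom.mul ih.2
      have h2 : ((qR * pp n)).IsHomogeneous (2 + n) := qR_hom.mul ih.1
      have e1 : 1 + (n+1) = n + 2 := by omega
      have e2 : 2 + n = n + 2 := by omega
      rw [e1] at h1; rw [e2] at h2
      exact h1.sub h2
  exact fun d => (key d).1

lemma ss_hom : ∀ d, (ss d).IsHomogeneous d := by
  have key : ∀ d, (ss d).IsHomogeneous d ∧ (ss (d+1)).IsHomogeneous (d+1) := by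
    intro d
    induction d with
    | zero => exact ⟨isHomogeneous_zero _ _ _, isHomogeneous_X ℝ 1⟩
    | succ n ih =>
      refine ⟨ih.2, ?_⟩
      show (ss (n+2)).IsHomogeneous (n+2)
      have h1 : ((C 2 * X 0 + X 1 : PR) * ss (n+1)).IsHomogeneous (1 + (n+1)) :=
        lin_hom.mul ih.2
      have h2 : ((qR * ss n)).IsHomogeneous (2 + n) := qR_hom.mul ih.1
      have e1 : 1 + (n+1) = n + 2 := by omega
      have e2 : 2 + n = n + 2 := by omega
      rw [e1] at h1; rw [e2] at h2
      exact h1.sub h2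
  exact fun d => (key d).1

lemma cx_qR : cx qR = qC := by
  unfold cx qR qC
  simp [MvPolynomial.map_X]

lemma cx_lin : cx (C 2 * X 0 + X 1) = uu + vv := by
  have h2 : (C zt : PC) + C wt = 1 := by rw [← C_add, zt_add_wt, C_1]
  unfold cx uu vv
  simp only [map_add, map_mul, MvPolynomial.map_X, MvPolynomial.map_C]
  have : (algebraMap ℝ ℂ) 2 = (2 : ℂ) := by norm_num
  rw [this]
  have hC2 : (C (2:ℂ) : PC) = 2 := map_ofNat _ 2
  rw [hC2]
  linear_combination (-(X 1) : PC) * h2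

lemma cx_pp : ∀ d, cx (pp d) = uu ^ d + vv ^ d := by
  have key : ∀ d, cx (pp d) = uu ^ d + vv ^ d ∧ cx (pp (d+1)) = uu ^ (d+1) + vv ^ (d+1) := by
    intro d
    induction d with
    | zero =>
      constructor
      · show cx (C 2) = _
        unfold cx
        simp only [MvPolynomial.map_C]
        have : (algebraMap ℝ ℂ) 2 = (2 : ℂ) := by norm_num
        rw [this]
        have hC2 : (C (2:ℂ) : PC) = 2 := map_ofNat _ 2
        rw [hC2]
        norm_num
      · show cx (C 2 * X 0 + X 1) = _
        rw [cx_lin]; ring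
    | succ n ih =>
      refine ⟨ih.2, ?_⟩
      show cx ((C 2 * X 0 + X 1) * pp (n+1) - qR * pp n) = _
      rw [map_sub, map_mul, map_mul, cx_lin, cx_qR, ih.1, ih.2, ← huv]
      ring
  exact fun d => (key d).1

lemma cx_ss : ∀ d, C (zt - wt) * cx (ss d) = uu ^ d - vv ^ d := by
  have key : ∀ d, (C (zt - wt) * cx (ss d) = uu ^ d - vv ^ d) ∧
      (C (zt - wt) * cx (ss (d+1)) = uu ^ (d+1) - vv ^ (d+1)) := by
    intro d
    induction d with
    | zero =>
      constructor
      · show C (zt - wt) * cx 0 = _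
        simp
      · show C (zt - wt) * cx (X 1) = _
        unfold cx
        simp only [MvPolynomial.map_X]
        unfold uu vv
        rw [map_sub]
        ring
    | succ n ih =>
      refine ⟨ih.2, ?_⟩
      show C (zt - wt) * cx ((C 2 * X 0 + X 1) * ss (n+1) - qR * ss n) = _
      rw [map_sub cx, map_mul cx, map_mul cx, cx_lin, cx_qR, ← huv]
      have h1 : (C 2 * X 0 + X 1 : PR) * ss (n+1) = ss (n+1) * (C 2 * X 0 + X 1) := by ring
      calc C (zt - wt) * ((uu + vv) * cx (ss (n+1)) - uu * vv * cx (ss n))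
          = (uu + vv) * (C (zt - wt) * cx (ss (n+1))) - uu * vv * (C (zt - wt) * cx (ss n)) := by
            ring
        _ = (uu + vv) * (uu ^ (n+1) - vv ^ (n+1)) - uu * vv * (uu ^ n - vv ^ n) := by
            rw [ih.1, ih.2]
        _ = uu ^ (n+2) - vv ^ (n+2) := by ring
  exact fun d => (key d).1

/-! ### action of T on the eigen-elements -/

lemma rhoC_C (c : ℂ) : rhoC (C c) = C c := by
  unfold rhoC; rw [aeval_C, algebraMap_eq]

lemma rho2C_C (c : ℂ) : rho2C (C c) = C c := by
  unfold rho2C; rw [aeval_C, algebraMap_eq]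

lemma rhoC_qb_u (b d : ℕ) : rhoC (qC ^ b * uu ^ d) = C (wt ^ d) * (qC ^ b * uu ^ d) := by
  rw [map_mul, map_pow, map_pow, rhoC_qC, rhoC_uu, mul_pow, ← C_pow]; ring

lemma rhoC_qb_v (b d : ℕ) : rhoC (qC ^ b * vv ^ d) = C (zt ^ d) * (qC ^ b * vv ^ d) := by
  rw [map_mul, map_pow, map_pow, rhoC_qC, rhoC_vv, mul_pow, ← C_pow]; ring

lemma TC_u (b d : ℕ) :
    rho2C (qC ^ b * uu ^ d) + rhoC (qC ^ b * uu ^ d) + qC ^ b * uu ^ d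
      = C (wt ^ (2*d) + wt ^ d + 1) * (qC ^ b * uu ^ d) := by
  rw [rho2C_eq, rhoC_qb_u, map_mul, rhoC_C, rhoC_qb_u, C_add, C_add, C_1, two_mul, pow_add, C_mul]
  ring

lemma TC_v (b d : ℕ) :
    rho2C (qC ^ b * vv ^ d) + rhoC (qC ^ b * vv ^ d) + qC ^ b * vv ^ d
      = C (zt ^ (2*d) + zt ^ d + 1) * (qC ^ b * vv ^ d) := by
  rw [rho2C_eq, rhoC_qb_v, map_mul, rhoC_C, rhoC_qb_v, C_add, C_add, C_1, two_mul, pow_add, C_mul]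
  ring

lemma TC_u_zero (b d : ℕ) (hd : d % 2 = 0) (h6 : d % 6 ≠ 0) :
    rho2C (qC ^ b * uu ^ d) + rhoC (qC ^ b * uu ^ d) + qC ^ b * uu ^ d = 0 := by
  rw [TC_u, sum_zero wt_quad wt_im hd h6, C_0, zero_mul]

lemma TC_v_zero (b d : ℕ) (hd : d % 2 = 0) (h6 : d % 6 ≠ 0) :
    rho2C (qC ^ b * vv ^ d) + rhoC (qC ^ b * vv ^ d) + qC ^ b * vv ^ d = 0 := by
  rw [TC_v, sum_zero zt_quad zt_im hd h6, C_0, zero_mul]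

lemma rhoC_qb_u_fix (b d : ℕ) (h6 : d % 6 = 0) : rhoC (qC ^ b * uu ^ d) = qC ^ b * uu ^ d := by
  rw [rhoC_qb_u, pow_mod6 (pow6 wt_quad) d, h6, pow_zero, C_1, one_mul]

lemma rhoC_qb_v_fix (b d : ℕ) (h6 : d % 6 = 0) : rhoC (qC ^ b * vv ^ d) = qC ^ b * vv ^ d := by
  rw [rhoC_qb_v, pow_mod6 (pow6 zt_quad) d, h6, pow_zero, C_1, one_mul]

lemma uv_pow_u (b d : ℕ) : uu ^ (b + d) * vv ^ b = qC ^ b * uu ^ d := by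
  rw [← huv, mul_pow, pow_add]; ring

lemma uv_pow_v (b d : ℕ) : uu ^ b * vv ^ (b + d) = qC ^ b * vv ^ d := by
  rw [← huv, mul_pow, pow_add]; ring

/-! ### transfer to the real side -/

lemma Treal_zero_of (f : PR) (h : rho2C (cx f) + rhoC (cx f) + cx f = 0) :
    rhoSqStar f + rhoStar f + f = 0 := by
  apply cx_inj
  rw [map_add cx, map_add cx, rhoSqStar_eq, rhoStar_eq, cx_rhoA, cx_rho2A, map_zero]
  exact h

lemma rho_fix_of (f : PR) (h : rhoC (cx f) = cx f) : rhoStar f = f := by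
  apply cx_inj
  rw [rhoStar_eq, cx_rhoA]
  exact h

/-! ### the basic family -/

section Families

variable (r : ℕ)

def E (a : Fin (r+1)) : PC := uu ^ (a : ℕ) * vv ^ (r - (a : ℕ))

def G (a : Fin (r+1)) : PR :=
  if r ≤ 2 * (a : ℕ) then qR ^ (r - (a : ℕ)) * pp (2 * (a : ℕ) - r)
  else qR ^ (a : ℕ) * ss (r - 2 * (a : ℕ))

def nv (a : Fin (r+1)) : Fin (r+1) := ⟨r - (a : ℕ), by have := a.isLt; omega⟩

lemma G_hom (a : Fin (r+1)) : (G r a).IsHomogeneous r := by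
  have ha : (a : ℕ) ≤ r := by have := a.isLt; omega
  unfold G; split_ifs with h
  · have h1 := (qR_hom.pow (r - (a:ℕ))).mul (pp_hom (2 * (a:ℕ) - r))
    have e : 2 * (r - (a:ℕ)) + (2 * (a:ℕ) - r) = r := by omega
    rwa [e] at h1
  · have h1 := (qR_hom.pow (a:ℕ)).mul (ss_hom (r - 2 * (a:ℕ)))
    have e : 2 * (a:ℕ) + (r - 2 * (a:ℕ)) = r := by omega
    rwa [e] at h1

lemma cx_G_ge (a : Fin (r+1)) (h : r ≤ 2 * (a : ℕ)) :
    cx (G r a) = E r a + E r (nv r a) := by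
  have ha : (a : ℕ) ≤ r := by have := a.isLt; omega
  unfold G E nv
  rw [if_pos h, map_mul cx, map_pow cx, cx_qR, cx_pp, ← huv]
  have h1 : (r - (a:ℕ)) + (2 * (a:ℕ) - r) = (a:ℕ) := by omega
  have h2 : r - (r - (a:ℕ)) = (a:ℕ) := by omega
  calc (uu * vv) ^ (r - (a:ℕ)) * (uu ^ (2*(a:ℕ) - r) + vv ^ (2*(a:ℕ) - r))
      = uu ^ ((r - (a:ℕ)) + (2*(a:ℕ) - r)) * vv ^ (r - (a:ℕ))
        + uu ^ (r - (a:ℕ)) * vv ^ ((r - (a:ℕ)) + (2*(a:ℕ) - r)) := by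
        rw [mul_pow, pow_add, pow_add]; ring
    _ = uu ^ (a:ℕ) * vv ^ (r - (a:ℕ)) + uu ^ (r - (a:ℕ)) * vv ^ (r - (r - (a:ℕ))) := by
        rw [h1, h2]

lemma cx_G_lt (a : Fin (r+1)) (h : 2 * (a : ℕ) < r) :
    C (zt - wt) * cx (G r a) = E r (nv r a) - E r a := by
  have ha : (a : ℕ) ≤ r := by have := a.isLt; omega
  unfold G E nv
  rw [if_neg (by omega), map_mul cx, map_pow cx, cx_qR, ← huv]
  have h1 : ((a:ℕ)) + (r - 2 * (a:ℕ)) = r - (a:ℕ) := by omega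
  have h2 : r - (r - (a:ℕ)) = (a:ℕ) := by omega
  calc C (zt - wt) * ((uu * vv) ^ (a:ℕ) * cx (ss (r - 2 * (a:ℕ))))
      = (uu * vv) ^ (a:ℕ) * (C (zt - wt) * cx (ss (r - 2 * (a:ℕ)))) := by ring
    _ = (uu * vv) ^ (a:ℕ) * (uu ^ (r - 2*(a:ℕ)) - vv ^ (r - 2*(a:ℕ))) := by rw [cx_ss]
    _ = uu ^ ((a:ℕ) + (r - 2*(a:ℕ))) * vv ^ (a:ℕ)
        - uu ^ (a:ℕ) * vv ^ ((a:ℕ) + (r - 2*(a:ℕ))) := by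
        rw [mul_pow, pow_add, pow_add]; ring
    _ = uu ^ (r - (a:ℕ)) * vv ^ (r - (r - (a:ℕ))) - uu ^ (a:ℕ) * vv ^ (r - (a:ℕ)) := by
        rw [h1, h2]

lemma G_mem_ker (hr : r % 2 = 0) (a : Fin (r+1)) (h6 : ¬ (2 * (a:ℕ)) % 6 = r % 6) :
    rhoSqStar (G r a) + rhoStar (G r a) + G r a = 0 := by
  have ha : (a : ℕ) ≤ r := by have := a.isLt; omega
  apply Treal_zero_of
  rcases le_or_gt r (2 * (a:ℕ)) with h | h
  · rw [cx_G_ge r a h]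
    unfold E nv
    simp only [map_add]
    have h2 : r - (r - (a:ℕ)) = (a:ℕ) := by omega
    rw [h2]
    -- uu^a vv^(r-a) = qC^(r-a) * uu^(2a-r) ; uu^(r-a) vv^a = qC^(r-a) * vv^(2a-r)
    have e1 : uu ^ (a:ℕ) * vv ^ (r - (a:ℕ)) = qC ^ (r - (a:ℕ)) * uu ^ (2*(a:ℕ) - r) := by
      have := uv_pow_u (r - (a:ℕ)) (2*(a:ℕ) - r)
      rwa [show (r - (a:ℕ)) + (2*(a:ℕ) - r) = (a:ℕ) by omega] at this
    have e2 : uu ^ (r - (a:ℕ)) * vv ^ (a:ℕ) = qC ^ (r - (a:ℕ)) * vv ^ (2*(a:ℕ) - r) := by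
      have := uv_pow_v (r - (a:ℕ)) (2*(a:ℕ) - r)
      rwa [show (r - (a:ℕ)) + (2*(a:ℕ) - r) = (a:ℕ) by omega] at this
    rw [e1, e2]
    have hu := TC_u_zero (r - (a:ℕ)) (2*(a:ℕ) - r) (by omega) (by omega)
    have hv := TC_v_zero (r - (a:ℕ)) (2*(a:ℕ) - r) (by omega) (by omega)
    linear_combination hu + hv
  · -- multiply by C (zt - wt) and cancel
    have hC : (C (zt - wt) : PC) ≠ 0 := by
      rw [Ne, C_eq_zero]; exact zt_sub_wt_ne
    apply mul_left_cancel₀ hC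
    rw [mul_zero]
    have hcongr : ∀ p : PC, C (zt - wt) * rhoC p = rhoC (C (zt - wt) * p) := by
      intro p; rw [map_mul, rhoC_C]
    have hcongr2 : ∀ p : PC, C (zt - wt) * rho2C p = rho2C (C (zt - wt) * p) := by
      intro p; rw [map_mul, rho2C_C]
    rw [mul_add, mul_add, hcongr, hcongr2, cx_G_lt r a h]
    unfold E nv
    have h2 : r - (r - (a:ℕ)) = (a:ℕ) := by omega
    rw [h2]
    have e1 : uu ^ (r - (a:ℕ)) * vv ^ (a:ℕ) = qC ^ (a:ℕ) * uu ^ (r - 2*(a:ℕ)) := by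
      have := uv_pow_u ((a:ℕ)) (r - 2*(a:ℕ))
      rwa [show (a:ℕ) + (r - 2*(a:ℕ)) = r - (a:ℕ) by omega] at this
    have e2 : uu ^ (a:ℕ) * vv ^ (r - (a:ℕ)) = qC ^ (a:ℕ) * vv ^ (r - 2*(a:ℕ)) := by
      have := uv_pow_v ((a:ℕ)) (r - 2*(a:ℕ))
      rwa [show (a:ℕ) + (r - 2*(a:ℕ)) = r - (a:ℕ) by omega] at this
    rw [e1, e2]
    have hu := TC_u_zero ((a:ℕ)) (r - 2*(a:ℕ)) (by omega) (by omega)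
    have hv := TC_v_zero ((a:ℕ)) (r - 2*(a:ℕ)) (by omega) (by omega)
    simp only [map_sub]
    linear_combination hu - hv

lemma G_mem_fix (a : Fin (r+1)) (h6 : (2 * (a:ℕ)) % 6 = r % 6) :
    rhoStar (G r a) = G r a := by
  have ha : (a : ℕ) ≤ r := by have := a.isLt; omega
  apply rho_fix_of
  rcases le_or_gt r (2 * (a:ℕ)) with h | h
  · rw [cx_G_ge r a h]
    unfold E nv
    have h2 : r - (r - (a:ℕ)) = (a:ℕ) := by omega
    rw [h2]
    have e1 : uu ^ (a:ℕ) * vv ^ (r - (a:ℕ)) = qC ^ (r - (a:ℕ)) * uu ^ (2*(a:ℕ) - r) := by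
      have := uv_pow_u (r - (a:ℕ)) (2*(a:ℕ) - r)
      rwa [show (r - (a:ℕ)) + (2*(a:ℕ) - r) = (a:ℕ) by omega] at this
    have e2 : uu ^ (r - (a:ℕ)) * vv ^ (a:ℕ) = qC ^ (r - (a:ℕ)) * vv ^ (2*(a:ℕ) - r) := by
      have := uv_pow_v (r - (a:ℕ)) (2*(a:ℕ) - r)
      rwa [show (r - (a:ℕ)) + (2*(a:ℕ) - r) = (a:ℕ) by omega] at this
    rw [e1, e2, map_add, rhoC_qb_u_fix _ _ (by omega), rhoC_qb_v_fix _ _ (by omega)]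
  · have hC : (C (zt - wt) : PC) ≠ 0 := by
      rw [Ne, C_eq_zero]; exact zt_sub_wt_ne
    apply mul_left_cancel₀ hC
    have hcongr : ∀ p : PC, C (zt - wt) * rhoC p = rhoC (C (zt - wt) * p) := by
      intro p; rw [map_mul, rhoC_C]
    rw [hcongr, cx_G_lt r a h]
    unfold E nv
    have h2 : r - (r - (a:ℕ)) = (a:ℕ) := by omega
    rw [h2]
    have e1 : uu ^ (r - (a:ℕ)) * vv ^ (a:ℕ) = qC ^ (a:ℕ) * uu ^ (r - 2*(a:ℕ)) := by
      have := uv_pow_u ((a:ℕ)) (r - 2*(a:ℕ))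
      rwa [show (a:ℕ) + (r - 2*(a:ℕ)) = r - (a:ℕ) by omega] at this
    have e2 : uu ^ (a:ℕ) * vv ^ (r - (a:ℕ)) = qC ^ (a:ℕ) * vv ^ (r - 2*(a:ℕ)) := by
      have := uv_pow_v ((a:ℕ)) (r - 2*(a:ℕ))
      rwa [show (a:ℕ) + (r - 2*(a:ℕ)) = r - (a:ℕ) by omega] at this
    rw [e1, e2, map_sub, rhoC_qb_u_fix _ _ (by omega), rhoC_qb_v_fix _ _ (by omega)]

end Families

/-! ### linear independence -/

def sg : PC →ₐ[ℂ] PC := aeval ![uu, vv]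
def dl : ℂ := (zt - wt)⁻¹
def ta : PC →ₐ[ℂ] PC := aeval ![X 0 - C zt * (C dl * (X 0 - X 1)), C dl * (X 0 - X 1)]

lemma ta_sg (f : PC) : ta (sg f) = f := by
  have hd : (zt - wt) * dl = 1 := mul_inv_cancel₀ zt_sub_wt_ne
  have hC : (C zt - C wt : PC) * C dl = 1 := by
    rw [← C_sub, ← C_mul, hd, C_1]
  have h : (ta.comp sg : PC →ₐ[ℂ] PC) = AlgHom.id ℂ PC := by
    apply MvPolynomial.algHom_ext
    intro i
    fin_cases i
    · show ta (sg (X 0)) = X 0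
      simp only [sg, ta, aeval_X, Matrix.cons_val_zero, Matrix.cons_val_one, Matrix.head_cons,
        uu, vv, map_add, map_mul, map_sub, aeval_C, algebraMap_eq]
      ring
    · show ta (sg (X 1)) = X 1
      simp only [sg, ta, aeval_X, Matrix.cons_val_zero, Matrix.cons_val_one, Matrix.head_cons,
        uu, vv, map_add, map_mul, map_sub, aeval_C, algebraMap_eq]
      linear_combination (-(X 0 - X 1) : PC) * hC
  exact DFunLike.congr_fun h f

lemma sg_inj : Function.Injective sg := Function.LeftInverse.injective ta_sg

def mon (r : ℕ) (a : Fin (r+1)) : PC := X 0 ^ (a : ℕ) * X 1 ^ (r - (a : ℕ))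

lemma mon_li (r : ℕ) : LinearIndependent ℂ (mon r) := by
  have key : ∀ a : Fin (r+1), mon r a
      = (basisMonomials (Fin 2) ℂ) (Finsupp.single 0 (a:ℕ) + Finsupp.single 1 (r - (a:ℕ))) := by
    intro a
    rw [coe_basisMonomials, mon, X_pow_eq_monomial, X_pow_eq_monomial, monomial_mul, one_mul]
  have hinj : Function.Injective
      (fun a : Fin (r+1) => Finsupp.single (0 : Fin 2) (a:ℕ) + Finsupp.single 1 (r - (a:ℕ))) := by
    intro a b hab
    have := DFunLike.congr_fun hab 0
    simp only [Finsupp.add_apply, Finsupp.single_apply] at this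
    apply Fin.ext
    simpa using this
  have := (basisMonomials (Fin 2) ℂ).linearIndependent.comp _ hinj
  have he : mon r = (basisMonomials (Fin 2) ℂ) ∘
      (fun a : Fin (r+1) => Finsupp.single (0 : Fin 2) (a:ℕ) + Finsupp.single 1 (r - (a:ℕ))) := by
    funext a; exact key a
  rwa [he]

lemma E_eq_sg_mon (r : ℕ) (a : Fin (r+1)) : E r a = sg (mon r a) := by
  unfold E mon sg
  rw [map_mul, map_pow, map_pow, aeval_X, aeval_X]
  simp only [Matrix.cons_val_zero, Matrix.cons_val_one, Matrix.head_cons]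

lemma E_li (r : ℕ) : LinearIndependent ℂ (E r) := by
  have := (mon_li r).map' sg.toLinearMap (LinearMap.ker_eq_bot.mpr sg_inj)
  have he : E r = ⇑sg.toLinearMap ∘ mon r := by
    funext a; exact E_eq_sg_mon r a
  rwa [he]

lemma nv_nv (r : ℕ) (a : Fin (r+1)) : nv r (nv r a) = a := by
  have := a.isLt
  apply Fin.ext
  show r - (r - (a:ℕ)) = (a:ℕ)
  omega

lemma cx_smul (g : ℝ) (f : PR) : cx (g • f) = (g : ℂ) • cx f := by
  rw [smul_eq_C_mul, map_mul cx, smul_eq_C_mul]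
  congr 1
  unfold cx
  rw [MvPolynomial.map_C]
  norm_num

def alf (r : ℕ) (g : Fin (r+1) → ℝ) (a : Fin (r+1)) : ℂ :=
  if r ≤ 2 * (a:ℕ) then (zt - wt) * (g a : ℂ) else -(g a : ℂ)
def bet (r : ℕ) (g : Fin (r+1) → ℝ) (a : Fin (r+1)) : ℂ :=
  if r ≤ 2 * (a:ℕ) then (zt - wt) * (g a : ℂ) else (g a : ℂ)

lemma key_split (r : ℕ) (g : Fin (r+1) → ℝ) (a : Fin (r+1)) :
    C (zt - wt) * (((g a : ℂ)) • cx (G r a))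
      = alf r g a • E r a + bet r g a • E r (nv r a) := by
  unfold alf bet
  split_ifs with h
  · rw [cx_G_ge r a h, smul_eq_C_mul, smul_eq_C_mul, smul_eq_C_mul, C_mul]
    ring
  · have h' : 2 * (a:ℕ) < r := by omega
    rw [smul_eq_C_mul, smul_eq_C_mul, smul_eq_C_mul]
    calc C (zt - wt) * (C ((g a : ℂ)) * cx (G r a))
        = C ((g a : ℂ)) * (C (zt - wt) * cx (G r a)) := by ring
      _ = C ((g a : ℂ)) * (E r (nv r a) - E r a) := by rw [cx_G_lt r a h']
      _ = C (-(g a : ℂ)) * E r a + C ((g a : ℂ)) * E r (nv r a) := by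
          rw [map_neg]; ring

lemma G_li (r : ℕ) : LinearIndependent ℝ (G r) := by
  rw [Fintype.linearIndependent_iff]
  intro g hg
  have h1 : ∑ a, ((g a : ℂ)) • cx (G r a) = 0 := by
    have h0 := congrArg cx hg
    rw [map_sum cx, map_zero] at h0
    rw [← h0]
    exact Finset.sum_congr rfl fun a _ => (cx_smul (g a) (G r a)).symm
  have h2 : ∑ a, (alf r g a • E r a + bet r g a • E r (nv r a)) = 0 := by
    have : ∑ a, (alf r g a • E r a + bet r g a • E r (nv r a))
        = C (zt - wt) * ∑ a, ((g a : ℂ)) • cx (G r a) := by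
      rw [Finset.mul_sum]
      exact Finset.sum_congr rfl fun a _ => (key_split r g a).symm
    rw [this, h1, mul_zero]
  have hinvol : Function.Involutive (nv r) := nv_nv r
  have hre : ∑ a, bet r g a • E r (nv r a) = ∑ a, bet r g (nv r a) • E r a := by
    apply Fintype.sum_equiv hinvol.toPerm
    intro a
    simp only [Function.Involutive.coe_toPerm]
    rw [nv_nv]
  have h3 : ∑ a, (alf r g a + bet r g (nv r a)) • E r a = 0 := by
    rw [Finset.sum_add_distrib, hre, ← Finset.sum_add_distrib] at h2
    rw [← h2]
    exact Finset.sum_congr rfl fun a _ => add_smul _ _ _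
  have h4 : ∀ a, alf r g a + bet r g (nv r a) = 0 :=
    Fintype.linearIndependent_iff.mp (E_li r) _ h3
  intro a
  have ha : (a:ℕ) ≤ r := by have := a.isLt; omega
  have hnv : ((nv r a : Fin (r+1)) : ℕ) = r - (a:ℕ) := rfl
  have e0 := h4 a
  have e1 := h4 (nv r a)
  rw [nv_nv] at e1
  have hzero : (g a : ℂ) = 0 := by
    rcases lt_trichotomy (2 * (a:ℕ)) r with hlt | heq | hgt
    · have c0 : ¬ r ≤ 2 * (a:ℕ) := by omega
      have c1 : r ≤ 2 * ((nv r a : Fin (r+1)) : ℕ) := by rw [hnv]; omega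
      unfold alf bet at e0 e1
      rw [if_neg c0] at e0 e1
      rw [if_pos c1] at e0 e1
      -- e0 : -(g a) + (zt-wt) * g (nv a) = 0 ; e1 : (zt-wt) * g (nv a) + g a = 0
      have h2g : (2 : ℂ) * (g a : ℂ) = 0 := by linear_combination e1 - e0
      exact (mul_eq_zero.mp h2g).resolve_left two_ne_zero
    · have c0 : r ≤ 2 * (a:ℕ) := by omega
      have hfix : nv r a = a := by apply Fin.ext; show r - (a:ℕ) = (a:ℕ); omega
      unfold alf bet at e0
      rw [hfix, if_pos c0, if_pos c0] at e0
      have h2g : (2 * (zt - wt)) * (g a : ℂ) = 0 := by linear_combination e0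
      exact (mul_eq_zero.mp h2g).resolve_left
        (mul_ne_zero two_ne_zero zt_sub_wt_ne)
    · have c0 : r ≤ 2 * (a:ℕ) := by omega
      have c1 : ¬ r ≤ 2 * ((nv r a : Fin (r+1)) : ℕ) := by rw [hnv]; omega
      unfold alf bet at e0 e1
      rw [if_pos c0] at e0 e1
      rw [if_neg c1] at e0 e1
      -- e0 : (zt-wt) g a + g (nv a) = 0 ; e1 : -(g (nv a)) + (zt-wt) * g a = 0
      have h2g : (2 * (zt - wt)) * (g a : ℂ) = 0 := by linear_combination e0 + e1
      exact (mul_eq_zero.mp h2g).resolve_left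
        (mul_ne_zero two_ne_zero zt_sub_wt_ne)
  exact_mod_cast hzero

/-! ### upper bound: homogeneous polys of degree r lie in span of monomials -/

def monR (r : ℕ) (a : Fin (r+1)) : PR := X 0 ^ (a : ℕ) * X 1 ^ (r - (a : ℕ))

lemma homog_le_span (r : ℕ) :
    MvPolynomial.homogeneousSubmodule (Fin 2) ℝ r ≤ Submodule.span ℝ (Set.range (monR r)) := by
  intro f hf
  rw [mem_homogeneousSubmodule] at hf
  rw [f.as_sum]
  apply Submodule.sum_mem
  intro d hd
  have hdeg : (Finsupp.weight 1) d = r := hf (MvPolynomial.mem_support_iff.mp hd)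
  have hsum : d 0 + d 1 = r := by
    rw [show (Finsupp.weight 1) d = Finsupp.degree d from by rw [Finsupp.degree_eq_weight_one]; rfl] at hdeg
    rw [← hdeg, Finsupp.degree]
    have hs : ∑ i ∈ d.support, d i = ∑ i : Fin 2, d i :=
      Finset.sum_subset (Finset.subset_univ _) (fun i _ hi => Finsupp.notMem_support_iff.mp hi)
    exact (Fin.sum_univ_two (fun i => d i)).symm.trans hs.symm
  have hd0 : d 0 ≤ r := by omega
  have hmono : monomial d (coeff d f) = (coeff d f) • monR r ⟨d 0, by omega⟩ := by
    rw [monomial_eq, Finsupp.prod_fintype _ _ (fun i => pow_zero _), Fin.prod_univ_two, monR]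
    show _ = (coeff d f) • (X 0 ^ (d 0) * X 1 ^ (r - d 0))
    rw [show r - d 0 = d 1 by omega, smul_eq_C_mul]
  rw [hmono]
  exact Submodule.smul_mem _ _ (Submodule.subset_span ⟨_, rfl⟩)

/-! ### counting -/

lemma card_fix (r : ℕ) (hr : r % 2 = 0) :
    Fintype.card {a : Fin (r+1) // (2 * (a:ℕ)) % 6 = r % 6} = 1 + 2 * (r / 6) := by
  classical
  rw [Fintype.card_subtype]
  have h1 : (Finset.univ.filter (fun a : Fin (r+1) => (2 * (a:ℕ)) % 6 = r % 6)).card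
      = ((Finset.range (r+1)).filter (fun n => (2*n) % 6 = r % 6)).card := by
    refine Finset.card_bij (fun a _ => (a : ℕ)) ?_ ?_ ?_
    · intro a ha
      simp only [Finset.mem_filter, Finset.mem_univ, true_and] at ha
      simp only [Finset.mem_filter, Finset.mem_range]
      exact ⟨a.isLt, ha⟩
    · intro a _ b _ h; exact Fin.ext h
    · intro n hn
      simp only [Finset.mem_filter, Finset.mem_range] at hn
      exact ⟨⟨n, hn.1⟩, by simp only [Finset.mem_filter, Finset.mem_univ, true_and]; exact hn.2,
        rfl⟩
  rw [h1]
  have h2 : ((Finset.range (r+1)).filter (fun n => (2*n) % 6 = r % 6))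
      = (Finset.range (1 + 2*(r/6))).image (fun k => 3*k + r/2 % 3) := by
    ext n
    simp only [Finset.mem_filter, Finset.mem_range, Finset.mem_image]
    constructor
    · rintro ⟨hn1, hn2⟩
      exact ⟨(n - r/2 % 3)/3, by omega, by omega⟩
    · rintro ⟨k, hk, rfl⟩
      omega
  rw [h2, Finset.card_image_of_injective _ (fun x y h => by omega), Finset.card_range]

/-! ### main dimension count -/

lemma finrank_Xsp (r : ℕ) (hr2 : r % 2 = 0) :
    Module.finrank ℝ ↥(Xsp r) = r - 2 * (r / 6) := by
  classical
  set W := MvPolynomial.homogeneousSubmodule (Fin 2) ℝ r with hW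
  have hWle : W ≤ Submodule.span ℝ (Set.range (monR r)) := homog_le_span r
  haveI : FiniteDimensional ℝ (Submodule.span ℝ (Set.range (monR r))) :=
    FiniteDimensional.span_of_finite ℝ (Set.finite_range (monR r))
  haveI hWfd : FiniteDimensional ℝ W := Submodule.finiteDimensional_of_le hWle
  have hXle : Xsp r ≤ W := inf_le_left
  haveI : FiniteDimensional ℝ (Xsp r) := Submodule.finiteDimensional_of_le hXle
  -- the two families
  let famK : {a : Fin (r+1) // ¬ (2 * (a:ℕ)) % 6 = r % 6} → PR := fun a => G r a.1
  let famF : {a : Fin (r+1) // (2 * (a:ℕ)) % 6 = r % 6} → PR := fun a => G r a.1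
  have liK : LinearIndependent ℝ famK := (G_li r).comp Subtype.val Subtype.val_injective
  have liF : LinearIndependent ℝ famF := (G_li r).comp Subtype.val Subtype.val_injective
  set SK := Submodule.span ℝ (Set.range famK) with hSK
  set SF := Submodule.span ℝ (Set.range famF) with hSF
  haveI : FiniteDimensional ℝ SF := FiniteDimensional.span_of_finite ℝ (Set.finite_range famF)
  have hSKrank : Module.finrank ℝ SK = Fintype.card {a : Fin (r+1) // ¬ (2 * (a:ℕ)) % 6 = r % 6} :=
    finrank_span_eq_card liK
  have hSFrank : Module.finrank ℝ SF = Fintype.card {a : Fin (r+1) // (2 * (a:ℕ)) % 6 = r % 6} :=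
    finrank_span_eq_card liF
  -- SK ≤ Xsp
  have hSKle : SK ≤ Xsp r := by
    rw [hSK, Submodule.span_le]
    rintro - ⟨a, rfl⟩
    refine Submodule.mem_inf.mpr ⟨(mem_homogeneousSubmodule _ _).mpr (G_hom r a.1), ?_⟩
    rw [LinearMap.mem_ker, LinearMap.add_apply, LinearMap.add_apply, LinearMap.id_apply]
    exact G_mem_ker r hr2 a.1 a.2
  -- SF consists of fixed vectors
  have hSFfix : SF ≤ LinearMap.ker (rhoStar - LinearMap.id) := by
    rw [hSF, Submodule.span_le]
    rintro - ⟨a, rfl⟩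
    rw [SetLike.mem_coe, LinearMap.mem_ker, LinearMap.sub_apply, LinearMap.id_apply,
      sub_eq_zero]
    exact G_mem_fix r a.1 a.2
  -- SF ≤ W
  have hSFle : SF ≤ W := by
    rw [hSF, Submodule.span_le]
    rintro - ⟨a, rfl⟩
    exact (mem_homogeneousSubmodule _ _).mpr (G_hom r a.1)
  -- disjointness
  have hdisj : Xsp r ⊓ SF = ⊥ := by
    rw [eq_bot_iff]
    rintro x ⟨hx1, hx2⟩
    have hfix : rhoStar x = x := by
      have := hSFfix hx2
      simp only [SetLike.mem_coe, LinearMap.mem_ker, LinearMap.sub_apply, LinearMap.id_apply,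
        sub_eq_zero] at this
      exact this
    have hker : rhoSqStar x + rhoStar x + x = 0 := by
      have := hx1.2
      simp only [SetLike.mem_coe, LinearMap.mem_ker, LinearMap.add_apply, LinearMap.add_apply,
        LinearMap.id_apply] at this
      exact this
    have hsq : rhoSqStar x = x := by
      rw [rhoSqStar_eq, rho2A_eq, ← rhoStar_eq, ← rhoStar_eq, hfix, hfix]
    rw [hsq, hfix] at hker
    have h3 : (3:ℝ) • x = 0 := by
      rw [show (3:ℝ) = 1 + 1 + 1 by norm_num, add_smul, add_smul, one_smul]
      exact hker
    have hx0 : x = 0 := by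
      have h9 : (3:ℝ)⁻¹ • ((3:ℝ) • x) = x := by rw [smul_smul]; norm_num
      rw [← h9, h3, smul_zero]
    simp [hx0]
  -- upper bound for the sup
  have hsuple : Xsp r ⊔ SF ≤ W := sup_le hXle hSFle
  have hranksum := Submodule.finrank_sup_add_finrank_inf_eq (Xsp r) SF
  rw [hdisj, finrank_bot, add_zero] at hranksum
  -- finrank W ≤ r + 1
  have hWrank : Module.finrank ℝ W ≤ r + 1 := by
    calc Module.finrank ℝ W ≤ Module.finrank ℝ (Submodule.span ℝ (Set.range (monR r))) :=
          Submodule.finrank_mono hWle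
    _ ≤ (Set.range (monR r)).toFinset.card := finrank_span_le_card _
    _ ≤ r + 1 := by
        rw [Set.toFinset_range]
        calc (Finset.univ.image (monR r)).card ≤ Finset.univ.card := Finset.card_image_le
        _ = r + 1 := by rw [Finset.card_univ, Fintype.card_fin]
  have hup : Module.finrank ℝ (Xsp r) + Module.finrank ℝ SF ≤ r + 1 :=
    hranksum ▸ le_trans (Submodule.finrank_mono hsuple) hWrank
  have hlow : Module.finrank ℝ SK ≤ Module.finrank ℝ (Xsp r) := Submodule.finrank_mono hSKle
  have hcardF : Fintype.card {a : Fin (r+1) // (2 * (a:ℕ)) % 6 = r % 6} = 1 + 2 * (r / 6) :=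
    card_fix r hr2
  have hcardK : Fintype.card {a : Fin (r+1) // ¬ (2 * (a:ℕ)) % 6 = r % 6}
      = (r + 1) - (1 + 2 * (r / 6)) := by
    rw [Fintype.card_subtype_compl, hcardF, Fintype.card_fin]
  have hfacts : 1 + 2 * (r/6) ≤ r + 1 := by omega
  omega

end AuxDimX
end

/-- For even `r`, the dimension of `X = {f ∈ V : f(y,-x-y) + f(x+y,-x) + f(x,y) = 0}`
equals `2r/3` if `r ≡ 0 (mod 6)`, `(2r+2)/3` if `r ≡ 2 (mod 6)`, and `(2r+4)/3` if
`r ≡ 4 (mod 6)`. -/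
theorem dim_X (r : ℕ) (hr : Even r) :
    (r % 6 = 0 → Module.finrank ℝ ↥(Xsp r) = 2 * r / 3) ∧
    (r % 6 = 2 → Module.finrank ℝ ↥(Xsp r) = (2 * r + 2) / 3) ∧
    (r % 6 = 4 → Module.finrank ℝ ↥(Xsp r) = (2 * r + 4) / 3) := by
  have hr2 : r % 2 = 0 := Nat.even_iff.mp hr
  have h := AuxDimX.finrank_Xsp r hr2
  refine ⟨fun h0 => ?_, fun h2 => ?_, fun h4 => ?_⟩ <;> omega
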